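/- arXiv:2112.13267 — 2 statements merged into one kernel-verified Lean document; each statement's English description precedes it below -/
import Mathlib

section
/- The Jaccard distance δ(A, B) = 1 - |A ∩ B| / |A ∪ B| satisfies the triangle inequality: for finite sets A, B, C (all pairwise unions nonempty), δ(A, C) ≤ δ(A, B) + δ(B, C). -/
/-!
Since `|A ∆ B| + |A ∩ B| = |A ∪ B|` and `2 |A ∪ B| = |A| + |B| + |A ∆ B|`, we have
`jacDist A B = 2 |A ∆ B| / (|A| + |B| + |A ∆ B|)`, also when `A ∪ B = ∅` (both sides are `0`).
With `a, b, c` the sizes of `A ∆ B`, `B ∆ C`, `A ∆ C`, monotonicity of `x ↦ x / (k + x)` and `c ≤ a + b` give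
`c / (|A| + |C| + c) ≤ (a + b) / (|A| + |C| + a + b)`; splitting the right side and shrinking each
denominator to `|A| + |B| + a` resp. `|B| + |C| + b` (possible since `|B| ≤ |A| + a` and `|B| ≤ |C| + b`)
gives the triangle inequality.
-/

open scoped symmDiff

/-- Jaccard distance with the convention `δ(∅, ∅) = 0`. -/
noncomputable def jacDist (A B : Finset ℕ) : ℚ :=
  if A ∪ B = ∅ then 0 else 1 - ((A ∩ B).card : ℚ) / ((A ∪ B).card : ℚ)

section OrderedField

variable {K : Type*} [Field K] [LinearOrder K] [IsStrictOrderedRing K]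

lemma div_add_self_le_div_add_self {k x y : K} (hk : 0 ≤ k) (hx : 0 ≤ x) (hxy : x ≤ y) :
    x / (k + x) ≤ y / (k + y) := by
  rcases hx.eq_or_lt with rfl | hx
  · simpa using div_nonneg hxy (add_nonneg hk hxy)
  rw [div_le_div_iff₀ (by linarith) (by linarith)]
  nlinarith

lemma div_le_div_of_nonneg_left_of_le {x D D' : K} (hx : 0 ≤ x) (hxD' : x ≤ D') (hD' : D' ≤ D) :
    x / D ≤ x / D' := by
  rcases hx.eq_or_lt with rfl | hx
  · simp
  · exact div_le_div_of_nonneg_left hx.le (hx.trans_le hxD') hD'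

lemma div_le_div_add_div_of_triangle {p q r a b c : K} (hp : 0 ≤ p) (hq : 0 ≤ q) (hr : 0 ≤ r)
    (ha : 0 ≤ a) (hb : 0 ≤ b) (hc : 0 ≤ c)
    (hcab : c ≤ a + b) (hqa : q ≤ a + p) (hqb : q ≤ b + r) :
    c / (p + r + c) ≤ a / (p + q + a) + b / (q + r + b) := by
  calc c / (p + r + c) ≤ (a + b) / (p + r + (a + b)) :=
        div_add_self_le_div_add_self (add_nonneg hp hr) hc hcab
    _ = a / (p + r + (a + b)) + b / (p + r + (a + b)) := add_div a b _
    _ ≤ a / (p + q + a) + b / (q + r + b) :=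
        add_le_add (div_le_div_of_nonneg_left_of_le ha (by linarith) (by linarith))
          (div_le_div_of_nonneg_left_of_le hb (by linarith) (by linarith))

end OrderedField

namespace Finset

variable {α : Type*} [DecidableEq α] (s t u : Finset α)

lemma card_symmDiff_add_card_inter : #(s ∆ t) + #(s ∩ t) = #(s ∪ t) := by
  rw [symmDiff_eq_sup_sdiff_inf]
  exact card_sdiff_add_card_eq_card inter_subset_union

lemma two_mul_card_union : 2 * #(s ∪ t) = #s + #t + #(s ∆ t) := by
  have := card_symmDiff_add_card_inter s t
  have := card_union_add_card_inter s t
  omega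

lemma card_symmDiff_le_add : #(s ∆ u) ≤ #(s ∆ t) + #(t ∆ u) :=
  (card_le_card (symmDiff_triangle s t u)).trans (card_union_le _ _)

lemma card_le_card_symmDiff_add_card : #s ≤ #(s ∆ t) + #t :=
  (card_le_card (le_symmDiff_sup_right s t)).trans (card_union_le _ _)

end Finset

open Finset

lemma jacDist_eq (A B : Finset ℕ) :
    jacDist A B = 2 * #(A ∆ B) / (#A + #B + #(A ∆ B)) := by
  have hden : (#A + #B + #(A ∆ B) : ℚ) = 2 * #(A ∪ B) := by
    exact_mod_cast (two_mul_card_union A B).symm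
  rw [jacDist, hden, mul_div_mul_left _ _ two_ne_zero]
  split_ifs with h
  · simp [union_eq_empty.mp h]
  have hu : (#(A ∪ B) : ℚ) ≠ 0 := by simpa [card_eq_zero] using h
  have hcard : (#(A ∆ B) : ℚ) + #(A ∩ B) = #(A ∪ B) := by
    exact_mod_cast card_symmDiff_add_card_inter A B
  field_simp
  linarith

theorem stmt_6_general (A B C : Finset ℕ) :
    jacDist A C ≤ jacDist A B + jacDist B C := by
  simp only [jacDist_eq, mul_div_assoc, ← mul_add]
  gcongr 2 * ?_
  have hBA := card_le_card_symmDiff_add_card B A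
  rw [symmDiff_comm] at hBA
  apply div_le_div_add_div_of_triangle (q := (#B : ℚ)) <;> try positivity
  · exact_mod_cast card_symmDiff_le_add A B C
  · exact_mod_cast hBA
  · exact_mod_cast card_le_card_symmDiff_add_card B C

theorem stmt_6 (A B C : Finset ℕ)
    (hAB : (A ∪ B).Nonempty) (hBC : (B ∪ C).Nonempty) (hAC : (A ∪ C).Nonempty) :
    jacDist A C ≤ jacDist A B + jacDist B C :=
  stmt_6_general A B C
end

section
/- In the Set Cover reduction graph, adding the budget-b edge set {(t, x_i) : S_i ∈ A} to the isolated target node t yields |N²_{G'}(t)| = b + n if and only if A = {S_i} is a set cover of the universe U of size n. Consequently, the maximum achievable |N²_{G'}(t)| over all choices of b edges from t to X equals b + n exactly when a set cover of size b exists. -/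
/-!
The nodes within two hops of `t` are exactly the chosen subset-nodes `x_i` (`i ∈ A`) and the
element-nodes `y_j` of the covered elements `j ∈ ⋃_{i ∈ A} S_i`; these two kinds are distinct, so
`|N²(t)| = |A| + |⋃_{i ∈ A} S_i|`, which equals `b + n` exactly when the union is all of `U`.
-/

/-- The 2-hop neighborhood of `t`: nodes other than `t` at shortest-path distance ≤ 2. -/
def twoHop {V : Type*} (G : SimpleGraph V) (t : V) : Set V :=
  {v | v ≠ t ∧ (G.Adj t v ∨ ∃ w, G.Adj t w ∧ G.Adj w v)}

/-- The Set-Cover reduction graph: bipartite graph between subset-nodes `x_i` and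
element-nodes `y_j` with an edge iff `u_j ∈ S_i`, plus an extra target node `t = none`
joined to the subset-nodes indexed by `A`. -/
def redGraph {n m : ℕ} (S : Fin m → Finset (Fin n)) (A : Finset (Fin m)) :
    SimpleGraph (Option (Fin m ⊕ Fin n)) :=
  SimpleGraph.fromRel (fun a b =>
    (∃ i j, a = some (Sum.inl i) ∧ b = some (Sum.inr j) ∧ j ∈ S i) ∨
    (∃ i, a = none ∧ b = some (Sum.inl i) ∧ i ∈ A))

section
variable {n m : ℕ} (S : Fin m → Finset (Fin n)) (A : Finset (Fin m))

lemma redGraph_adj_none (v : Option (Fin m ⊕ Fin n)) :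
    (redGraph S A).Adj none v ↔ ∃ i ∈ A, v = some (Sum.inl i) := by
  simp only [redGraph, SimpleGraph.fromRel_adj]
  aesop

lemma redGraph_adj_inl (i : Fin m) (v : Option (Fin m ⊕ Fin n)) :
    (redGraph S A).Adj (some (Sum.inl i)) v ↔
      (v = none ∧ i ∈ A) ∨ ∃ j ∈ S i, v = some (Sum.inr j) := by
  simp only [redGraph, SimpleGraph.fromRel_adj]
  aesop

lemma twoHop_redGraph_none :
    twoHop (redGraph S A) none = ((A.disjSum (A.biUnion S)).map .some : Set _) := by
  ext v
  constructor
  · rintro ⟨hv, hadj | ⟨w, hw, hwv⟩⟩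
    · obtain ⟨i, hi, rfl⟩ := (redGraph_adj_none S A v).mp hadj
      simpa using hi
    · obtain ⟨i, hi, rfl⟩ := (redGraph_adj_none S A w).mp hw
      rcases (redGraph_adj_inl S A i v).mp hwv with ⟨rfl, -⟩ | ⟨j, hj, rfl⟩
      · exact absurd rfl hv
      · simpa using ⟨i, hi, hj⟩
  · intro hv
    obtain ⟨a, ha, rfl⟩ := Finset.mem_map.mp hv
    refine ⟨Option.some_ne_none a, ?_⟩
    rcases a with i | j
    · exact .inl ((redGraph_adj_none S A _).mpr ⟨i, by simpa using ha, rfl⟩)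
    · obtain ⟨i, hi, hj⟩ := Finset.mem_biUnion.mp (Finset.inr_mem_disjSum.mp ha)
      exact .inr ⟨_, (redGraph_adj_none S A _).mpr ⟨i, hi, rfl⟩,
        (redGraph_adj_inl S A i _).mpr (.inr ⟨j, hj, rfl⟩)⟩

lemma ncard_twoHop_redGraph_none :
    (twoHop (redGraph S A) none).ncard = A.card + (A.biUnion S).card := by
  rw [twoHop_redGraph_none, Set.ncard_coe_finset, Finset.card_map, Finset.card_disjSum]

lemma card_biUnion_eq_iff_forall_mem :
    (A.biUnion S).card = n ↔ ∀ u : Fin n, ∃ i ∈ A, u ∈ S i := by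
  simp only [← Finset.mem_biUnion, ← Finset.eq_univ_iff_forall, ← Finset.card_eq_iff_eq_univ,
    Fintype.card_fin]

end

theorem stmt_10 (n m b : ℕ) (S : Fin m → Finset (Fin n)) :
    (∀ A : Finset (Fin m), A.card = b →
      ((twoHop (redGraph S A) none).ncard = b + n ↔ ∀ u : Fin n, ∃ i ∈ A, u ∈ S i)) ∧
    ((∃ A : Finset (Fin m), A.card = b ∧
        (twoHop (redGraph S A) none).ncard = b + n) ↔
      (∃ A : Finset (Fin m), A.card = b ∧ ∀ u : Fin n, ∃ i ∈ A, u ∈ S i)) := by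
  have key (A : Finset (Fin m)) (hA : A.card = b) :
      (twoHop (redGraph S A) none).ncard = b + n ↔ ∀ u : Fin n, ∃ i ∈ A, u ∈ S i := by
    rw [ncard_twoHop_redGraph_none, hA, Nat.add_left_cancel_iff, card_biUnion_eq_iff_forall_mem]
  exact ⟨key, exists_congr fun A => and_congr_right (key A)⟩
end
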